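/- Let u, v : ℝ³ → ℝ be measurable functions in L⁶(ℝ³), let M ⊆ ℝ³ be a measurable set of finite measure, and let V, W : ℝ³ → [0,∞) be measurable with V(x)W(x) > c² for all x in the complement of M, where c > 0. Assume ∫ V u² dx < ∞ and ∫ W v² dx < ∞. Then ∫_{ℝ³} |u v| dx ≤ ‖u‖₆ ‖v‖₆ |M|^{2/3} + (1/(2c)) ∫_{ℝ³} (V u² + W v²) dx. -/

import Mathlib

/-! On `M`, Hölder's inequality gives `‖uv‖₁ ≤ ‖uv‖₃ |M|^{2/3} ≤ ‖u‖₆ ‖v‖₆ |M|^{2/3}`.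
Off `M`, `VW > c²` and AM-GM give `2c|uv| ≤ 2√(VW)|uv| ≤ Vu² + Wv²`. -/

open MeasureTheory Set
open scoped ENNReal

section Holder

variable {α 𝕜 : Type*} [MeasurableSpace α] [NormedRing 𝕜] {μ : Measure α} {f g : α → 𝕜}
  {p q r : ℝ≥0∞}

theorem eLpNorm_one_mul_le_mul_measure_univ_rpow [ENNReal.HolderTriple p q r] (hr : 1 ≤ r)
    (hf : AEStronglyMeasurable f μ) (hg : AEStronglyMeasurable g μ) :
    eLpNorm (f * g) 1 μ ≤ eLpNorm f p μ * eLpNorm g q μ * μ univ ^ (1 - 1 / r.toReal) := by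
  have hmul : eLpNorm (fun x => f x * g x) r μ ≤ eLpNorm f p μ * eLpNorm g q μ := by
    simpa only [ENNReal.coe_one, one_mul] using
      eLpNorm_le_eLpNorm_mul_eLpNorm_of_nnnorm hf hg (· * ·) 1
        (.of_forall fun x => by simpa using nnnorm_mul_le (f x) (g x))
  calc eLpNorm (f * g) 1 μ ≤ eLpNorm (f * g) r μ * μ univ ^ (1 - 1 / r.toReal) := by
        simpa using eLpNorm_le_eLpNorm_mul_rpow_measure_univ hr (hf.mul hg)
    _ ≤ eLpNorm f p μ * eLpNorm g q μ * μ univ ^ (1 - 1 / r.toReal) := by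
        gcongr
        exact hmul

theorem integral_norm_mul_le_lpNorm_mul_lpNorm_mul_measureReal_rpow [IsFiniteMeasure μ]
    [ENNReal.HolderTriple p q r] (hr : 1 ≤ r) (hf : MemLp f p μ) (hg : MemLp g q μ) :
    ∫ x, ‖f x * g x‖ ∂μ ≤ lpNorm f p μ * lpNorm g q μ * μ.real univ ^ (1 - 1 / r.toReal) := by
  have h := eLpNorm_one_mul_le_mul_measure_univ_rpow (p := p) (q := q) hr hf.1 hg.1
  change ∫ x, ‖(f * g) x‖ ∂μ ≤ _
  rw [← lpNorm_one_eq_integral_norm (hf.1.mul hg.1), ← toReal_eLpNorm (hf.1.mul hg.1),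
    ← toReal_eLpNorm hf.1, ← toReal_eLpNorm hg.1, measureReal_def, ENNReal.toReal_rpow,
    ← ENNReal.toReal_mul, ← ENNReal.toReal_mul]
  have hexp : 0 ≤ 1 - 1 / r.toReal := by
    rcases eq_or_ne r ∞ with rfl | hr_top
    · simp
    · have : 1 ≤ r.toReal := by simpa using ENNReal.toReal_mono hr_top hr
      linarith [div_le_one_of_le₀ this (zero_le_one.trans this)]
  exact ENNReal.toReal_mono (ENNReal.mul_ne_top (ENNReal.mul_ne_top (hf.eLpNorm_ne_top)
    hg.eLpNorm_ne_top) (ENNReal.rpow_ne_top_of_nonneg hexp (measure_ne_top μ univ))) h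

end Holder

theorem lpNorm_restrict_le {α E : Type*} [MeasurableSpace α] [NormedAddCommGroup E]
    {μ : Measure α} {f : α → E} {p : ℝ≥0∞} (hf : MemLp f p μ) (s : Set α) :
    lpNorm f p (μ.restrict s) ≤ lpNorm f p μ := by
  rw [← toReal_eLpNorm hf.1, ← toReal_eLpNorm hf.1.restrict]
  exact ENNReal.toReal_mono hf.2.ne (eLpNorm_restrict_le f p μ s)

theorem integral_le_setIntegral_add_integral {α : Type*} [MeasurableSpace α] {μ : Measure α}
    {f g : α → ℝ} {s : Set α} (hs : MeasurableSet s) (hf : 0 ≤ f) (hg : 0 ≤ g)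
    (hfs : IntegrableOn f s μ) (hgi : Integrable g μ) (hfg : ∀ x ∉ s, f x ≤ g x) :
    ∫ x, f x ∂μ ≤ ∫ x in s, f x ∂μ + ∫ x, g x ∂μ := by
  calc ∫ x, f x ∂μ ≤ ∫ x, s.indicator f x + g x ∂μ := by
        refine integral_mono_of_nonneg (.of_forall hf) ((hfs.integrable_indicator hs).add hgi)
          (.of_forall fun x => ?_)
        by_cases hx : x ∈ s
        · simpa [hx] using hg x
        · simpa [hx] using hfg x hx
    _ = ∫ x in s, f x ∂μ + ∫ x, g x ∂μ := by
        rw [integral_add (hfs.integrable_indicator hs) hgi, integral_indicator hs]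

theorem two_mul_mul_abs_mul_le {a b c V W : ℝ} (hV : 0 ≤ V) (hW : 0 ≤ W)
    (hVW : c ^ 2 ≤ V * W) : 2 * c * |a * b| ≤ V * a ^ 2 + W * b ^ 2 := by
  have hc_le : c ≤ √V * √W := by
    rw [← Real.sqrt_mul hV]; exact Real.le_sqrt_of_sq_le hVW
  calc 2 * c * |a * b| ≤ 2 * (√V * |a|) * (√W * |b|) := by
        rw [abs_mul]; nlinarith [mul_nonneg (abs_nonneg a) (abs_nonneg b)]
    _ ≤ (√V * |a|) ^ 2 + (√W * |b|) ^ 2 := two_mul_le_add_sq _ _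
    _ = V * a ^ 2 + W * b ^ 2 := by
        rw [mul_pow, mul_pow, Real.sq_sqrt hV, Real.sq_sqrt hW, sq_abs, sq_abs]

instance : ENNReal.HolderTriple 6 6 3 where
  inv_add_inv_eq_inv := by
    rw [show (6 : ℝ≥0∞) = 2 * 3 by norm_num, ENNReal.mul_inv (by simp) (by simp), ← add_mul,
      ENNReal.inv_two_add_inv_two, one_mul]

section

variable {α : Type*} [MeasurableSpace α] {μ : Measure α} {u v : α → ℝ} {s : Set α}

theorem integrableOn_abs_mul_of_memLp_six (hs : μ s < ∞) (hu : MemLp u 6 μ) (hv : MemLp v 6 μ) :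
    IntegrableOn (fun x => |u x * v x|) s μ :=
  have : IsFiniteMeasure (μ.restrict s) := ⟨by rwa [Measure.restrict_apply_univ]⟩
  ((hv.restrict s).mul' (hu.restrict s) (r := 3)).integrable (by norm_num) |>.abs

theorem setIntegral_abs_mul_le_of_memLp_six (hs : μ s < ∞) (hu : MemLp u 6 μ)
    (hv : MemLp v 6 μ) :
    ∫ x in s, |u x * v x| ∂μ ≤
      (∫ x, |u x| ^ (6 : ℝ) ∂μ) ^ ((1 : ℝ) / 6) * (∫ x, |v x| ^ (6 : ℝ) ∂μ) ^ ((1 : ℝ) / 6) *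
        (μ s).toReal ^ ((2 : ℝ) / 3) := by
  have : IsFiniteMeasure (μ.restrict s) := ⟨by rwa [Measure.restrict_apply_univ]⟩
  have hHolder := integral_norm_mul_le_lpNorm_mul_lpNorm_mul_measureReal_rpow (r := 3)
    (by norm_num) (hu.restrict s) (hv.restrict s)
  have hu_le := lpNorm_restrict_le hu s
  have hv_le := lpNorm_restrict_le hv s
  rw [lpNorm_eq_integral_norm_rpow_toReal (by norm_num) (by norm_num) hu.1] at hu_le
  rw [lpNorm_eq_integral_norm_rpow_toReal (by norm_num) (by norm_num) hv.1] at hv_le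
  rw [show (1 : ℝ) - 1 / ENNReal.toReal 3 = 2 / 3 by norm_num] at hHolder
  simp only [Real.norm_eq_abs, measureReal_def, Measure.restrict_apply_univ] at hHolder
  simp only [Real.norm_eq_abs, ENNReal.toReal_ofNat, inv_eq_one_div] at hu_le hv_le
  refine hHolder.trans (mul_le_mul_of_nonneg_right ?_ (by positivity))
  exact mul_le_mul hu_le hv_le lpNorm_nonneg (by positivity)

end

theorem stmt_3_general (u v V W : (Fin 3 → ℝ) → ℝ) (c : ℝ) (hc : 0 < c)
    (hV0 : ∀ x, 0 ≤ V x) (hW0 : ∀ x, 0 ≤ W x)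
    (M : Set (Fin 3 → ℝ)) (hM : MeasurableSet M) (hMfin : volume M < ⊤)
    (hVW : ∀ x ∉ M, c ^ 2 < V x * W x)
    (hu6 : MemLp u 6 volume) (hv6 : MemLp v 6 volume)
    (huV : Integrable (fun x => V x * (u x) ^ 2))
    (hvW : Integrable (fun x => W x * (v x) ^ 2)) :
    ∫ x, |u x * v x| ≤
      (∫ x, |u x| ^ (6 : ℝ)) ^ ((1 : ℝ) / 6) * (∫ x, |v x| ^ (6 : ℝ)) ^ ((1 : ℝ) / 6) *
        (volume M).toReal ^ ((2 : ℝ) / 3) +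
      (1 / (2 * c)) * ∫ x, (V x * (u x) ^ 2 + W x * (v x) ^ 2) := by
  have hcompl : ∀ x ∉ M, |u x * v x| ≤ 1 / (2 * c) * (V x * u x ^ 2 + W x * v x ^ 2) := by
    intro x hx
    rw [div_mul_eq_mul_div, one_mul, le_div_iff₀ (by positivity), mul_comm]
    exact two_mul_mul_abs_mul_le (hV0 x) (hW0 x) (hVW x hx).le
  have hbound_nonneg : ∀ x, 0 ≤ 1 / (2 * c) * (V x * u x ^ 2 + W x * v x ^ 2) := fun x => by
    have := hV0 x; have := hW0 x; positivity
  calc ∫ x, |u x * v x|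
      ≤ (∫ x in M, |u x * v x|) + ∫ x, 1 / (2 * c) * (V x * u x ^ 2 + W x * v x ^ 2) :=
        integral_le_setIntegral_add_integral hM (fun x => abs_nonneg _) hbound_nonneg
          (integrableOn_abs_mul_of_memLp_six hMfin hu6 hv6) ((huV.add hvW).const_mul _) hcompl
    _ ≤ _ := by
        rw [integral_const_mul]
        gcongr
        exact setIntegral_abs_mul_le_of_memLp_six hMfin hu6 hv6

theorem stmt_3 (u v V W : (Fin 3 → ℝ) → ℝ) (c : ℝ) (hc : 0 < c)
    (hu : Measurable u) (hv : Measurable v)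
    (hV : Measurable V) (hW : Measurable W)
    (hV0 : ∀ x, 0 ≤ V x) (hW0 : ∀ x, 0 ≤ W x)
    (M : Set (Fin 3 → ℝ)) (hM : MeasurableSet M) (hMfin : volume M < ⊤)
    (hVW : ∀ x ∉ M, c ^ 2 < V x * W x)
    (hu6 : MemLp u 6 volume) (hv6 : MemLp v 6 volume)
    (huV : Integrable (fun x => V x * (u x) ^ 2))
    (hvW : Integrable (fun x => W x * (v x) ^ 2)) :
    ∫ x, |u x * v x| ≤
      (∫ x, |u x| ^ (6 : ℝ)) ^ ((1 : ℝ) / 6) * (∫ x, |v x| ^ (6 : ℝ)) ^ ((1 : ℝ) / 6) *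
        (volume M).toReal ^ ((2 : ℝ) / 3) +
      (1 / (2 * c)) * ∫ x, (V x * (u x) ^ 2 + W x * (v x) ^ 2) :=
  stmt_3_general u v V W c hc hV0 hW0 M hM hMfin hVW hu6 hv6 huV hvW
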